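/- arXiv:2602.14908 — 2 statements merged into one kernel-verified Lean document; each statement's English description precedes it below -/
import Mathlib

section
/- Let D₆ denote the lattice of vectors (x₁,…,x₆,−x₆,…,−x₁) ∈ ℤ¹² with Σxᵢ even, and let the Weyl group W(D₆) = {±1}⁵ ⋊ S₆ act by permuting coordinates x₁,…,x₆ and changing an even number of signs. Relabel the coordinates as y₁⁺,y₁⁻,y₂⁺,y₂⁻,y₃⁺,y₃⁻. Define for i=1,2,3 elements: rᵢ swaps y_j⁺ with y_k⁺ and negates y_j⁻, y_k⁻ (where {i,j,k}={1,2,3}); hᵢ negates y_j⁻ and y_k⁻; vᵢ swaps (y_j⁺,y_j⁻) with (y_k⁺,y_k⁻). Then the group generated by the hᵢrᵢ and the vᵢrᵢ is isomorphic to S₃ × S₄, with the S₃ generated by {hᵢrᵢ} and the commuting S₄ generated by {vᵢrᵢ}. -/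
/-!
**Statement 3.**  Coordinates on the `D₆`-lattice are relabeled
`(y₁⁺, y₁⁻, y₂⁺, y₂⁻, y₃⁺, y₃⁻)`, indexed below by `0,…,5`.  For `i = 1,2,3` (with
`{i,j,k} = {1,2,3}`): `rᵢ` swaps `y_j⁺ ↔ y_k⁺` and negates `y_j⁻, y_k⁻`; `hᵢ` negates
`y_j⁻, y_k⁻`; `vᵢ` swaps `(y_j⁺, y_j⁻) ↔ (y_k⁺, y_k⁻)`.  The group generated by the
`hᵢrᵢ` and the `vᵢrᵢ` is isomorphic to `S₃ × S₄`, with the `S₃` generated by `{hᵢrᵢ}`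
and the commuting `S₄` generated by `{vᵢrᵢ}`.
-/

namespace Stmt3

abbrev GL6 := Matrix.GeneralLinearGroup (Fin 6) ℤ

def mkInvol (A : Matrix (Fin 6) (Fin 6) ℤ) (h : A * A = 1) : GL6 := ⟨A, A, h, h⟩

def R1mat : Matrix (Fin 6) (Fin 6) ℤ :=
  !![1,0,0,0,0,0; 0,1,0,0,0,0; 0,0,0,0,1,0; 0,0,0,-1,0,0; 0,0,1,0,0,0; 0,0,0,0,0,-1]
def R2mat : Matrix (Fin 6) (Fin 6) ℤ :=
  !![0,0,0,0,1,0; 0,-1,0,0,0,0; 0,0,1,0,0,0; 0,0,0,1,0,0; 1,0,0,0,0,0; 0,0,0,0,0,-1]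
def R3mat : Matrix (Fin 6) (Fin 6) ℤ :=
  !![0,0,1,0,0,0; 0,-1,0,0,0,0; 1,0,0,0,0,0; 0,0,0,-1,0,0; 0,0,0,0,1,0; 0,0,0,0,0,1]
def H1mat : Matrix (Fin 6) (Fin 6) ℤ :=
  !![1,0,0,0,0,0; 0,1,0,0,0,0; 0,0,1,0,0,0; 0,0,0,-1,0,0; 0,0,0,0,1,0; 0,0,0,0,0,-1]
def H2mat : Matrix (Fin 6) (Fin 6) ℤ :=
  !![1,0,0,0,0,0; 0,-1,0,0,0,0; 0,0,1,0,0,0; 0,0,0,1,0,0; 0,0,0,0,1,0; 0,0,0,0,0,-1]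
def H3mat : Matrix (Fin 6) (Fin 6) ℤ :=
  !![1,0,0,0,0,0; 0,-1,0,0,0,0; 0,0,1,0,0,0; 0,0,0,-1,0,0; 0,0,0,0,1,0; 0,0,0,0,0,1]
def V1mat : Matrix (Fin 6) (Fin 6) ℤ :=
  !![1,0,0,0,0,0; 0,1,0,0,0,0; 0,0,0,0,1,0; 0,0,0,0,0,1; 0,0,1,0,0,0; 0,0,0,1,0,0]
def V2mat : Matrix (Fin 6) (Fin 6) ℤ :=
  !![0,0,0,0,1,0; 0,0,0,0,0,1; 0,0,1,0,0,0; 0,0,0,1,0,0; 1,0,0,0,0,0; 0,1,0,0,0,0]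
def V3mat : Matrix (Fin 6) (Fin 6) ℤ :=
  !![0,0,1,0,0,0; 0,0,0,1,0,0; 1,0,0,0,0,0; 0,1,0,0,0,0; 0,0,0,0,1,0; 0,0,0,0,0,1]

def r1 : GL6 := mkInvol R1mat (by decide)
def r2 : GL6 := mkInvol R2mat (by decide)
def r3 : GL6 := mkInvol R3mat (by decide)
def h1 : GL6 := mkInvol H1mat (by decide)
def h2 : GL6 := mkInvol H2mat (by decide)
def h3 : GL6 := mkInvol H3mat (by decide)
def v1 : GL6 := mkInvol V1mat (by decide)
def v2 : GL6 := mkInvol V2mat (by decide)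
def v3 : GL6 := mkInvol V3mat (by decide)

/-!
Each `hᵢrᵢ` is the transposition of `y_j⁺` and `y_k⁺`, while each `vᵢrᵢ` fixes the `y⁺`
coordinates and acts on `(y₁⁻, y₂⁻, y₃⁻)` as the reflection in `e_j + e_k`. So the two generating
sets live in two commuting diagonal blocks of `GL₆(ℤ)` that meet only in `1`. On the `y⁺` block,
`S₃` acts by permutation matrices. On the `y⁻` block the reflections permute the vertices
`(1,1,1), (1,-1,-1), (-1,1,-1), (-1,-1,1)` of a regular tetrahedron, `vᵢrᵢ` as the transposition
`(0 i)`; as these vertices span `ℚ³`, this is a faithful representation of `S₄`. Transpositions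
generate the symmetric groups, so the images of these representations are the closures in question.
-/

open Equiv Matrix Function

section BlockDiagonal

variable {m n o R : Type*} [Fintype m] [DecidableEq m] [Fintype n] [DecidableEq n] [Fintype o]
  [DecidableEq o] [Semiring R]

def blockDiagonalGL (e : m × o ≃ n) : (o → GL m R) →* GL n R :=
  (Units.map ((reindexRingEquiv R e).toRingHom.comp (blockDiagonalRingHom m o R)).toMonoidHom).comp
    MulEquiv.piUnits.symm.toMonoidHom

theorem blockDiagonalGL_injective (e : m × o ≃ n) : Injective (blockDiagonalGL (R := R) e) :=
  (Units.map_injective ((reindexRingEquiv R e).injective.comp blockDiagonal_injective)).comp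
    MulEquiv.piUnits.symm.injective

end BlockDiagonal

theorem permMatrixHom_injective {n R : Type*} [DecidableEq n] [Fintype n] [NonAssocSemiring R]
    [Nontrivial R] : Injective (permMatrixHom (n := n) (R := R)) := by
  intro σ τ h
  have h' : σ⁻¹.toPEquiv = τ⁻¹.toPEquiv := PEquiv.toMatrix_injective h
  exact inv_injective (Equiv.ext fun x => Option.some_injective _ (by
    simpa only [toPEquiv_apply] using congrArg (· x) h'))

theorem toHomUnits_injective {G M : Type*} [Group G] [Monoid M] {f : G →* M}
    (hf : Injective f) : Injective f.toHomUnits :=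
  fun _ _ h => hf (congrArg Units.val h)

theorem range_comp_le_range {G N P : Type*} [Group G] [Group N] [Group P] (g : N →* P)
    (f : G →* N) : (g.comp f).range ≤ g.range := by
  rw [MonoidHom.range_comp]
  exact Subgroup.map_le_range _ _

theorem nonempty_mulEquiv_of_range_eq {G H : Type*} [Group G] [Group H] {f : G →* H}
    (hf : Injective f) {K : Subgroup H} (hK : f.range = K) : Nonempty (K ≃* G) :=
  ⟨(MulEquiv.subgroupCongr hK.symm).trans (MonoidHom.ofInjective hf).symm⟩

theorem closure_eq_top_of_forall_swap_mem {α : Type*} [Finite α] [DecidableEq α]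
    {S : Set (Perm α)} (a : α) (h : ∀ x, x ≠ a → swap a x ∈ S) : Subgroup.closure S = ⊤ := by
  have mem : ∀ x, swap a x ∈ Subgroup.closure S := fun x => by
    by_cases hx : x = a
    · rw [hx, swap_self]
      exact one_mem _
    · exact Subgroup.subset_closure (h x hx)
  rw [eq_top_iff, ← Perm.closure_isSwap, Subgroup.closure_le]
  rintro _ ⟨x, y, hxy, rfl⟩
  by_cases hx : x = a
  · rw [hx]
    exact mem y
  by_cases hy : y = a
  · rw [hy, Equiv.swap_comm]
    exact mem x
  rw [← swap_mul_swap_mul_swap hy (Ne.symm hxy), Equiv.swap_comm y a]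
  exact mul_mem (mul_mem (mem x) (mem y)) (mem x)

theorem closure_swaps_fin3 :
    Subgroup.closure ({swap 1 2, swap 0 2, swap 0 1} : Set (Perm (Fin 3))) = ⊤ :=
  closure_eq_top_of_forall_swap_mem 0 (by decide)

theorem closure_swaps_fin4 :
    Subgroup.closure ({swap 0 1, swap 0 2, swap 0 3} : Set (Perm (Fin 4))) = ⊤ :=
  closure_eq_top_of_forall_swap_mem 0 (by decide)

def tetraVertices : Matrix (Fin 4) (Fin 3) ℤ := !![1, 1, 1; 1, -1, -1; -1, 1, -1; -1, -1, 1]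

/-- The map sending each vertex `d_a` to `d_{σ a}`, namely `¼ ∑ₐ d_{σ a} d_aᵀ` since
`∑ₐ d_a d_aᵀ = 4`; the integer division by `4` is exact. -/
def tetraMatrix (σ : Perm (Fin 4)) : Matrix (Fin 3) (Fin 3) ℤ :=
  ((tetraVertices.submatrix σ id)ᵀ * tetraVertices).map (· / 4)

theorem tetraMatrix_mul_transpose (σ : Perm (Fin 4)) :
    tetraMatrix σ * tetraVerticesᵀ = tetraVerticesᵀ.submatrix id σ := by
  revert σ
  decide

theorem transpose_mul_tetraVertices : tetraVerticesᵀ * tetraVertices = (4 : ℤ) • 1 := by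
  decide

theorem tetraVertices_row_injective : Injective tetraVertices.row := by
  decide

theorem eq_of_mul_tetraVertices_transpose {A B : Matrix (Fin 3) (Fin 3) ℤ}
    (h : A * tetraVerticesᵀ = B * tetraVerticesᵀ) : A = B := by
  have h4 := congrArg (· * tetraVertices) h
  simp only [Matrix.mul_assoc, transpose_mul_tetraVertices, Matrix.mul_smul, Matrix.mul_one] at h4
  exact smul_right_injective _ (by norm_num) h4

theorem tetraMatrix_one : tetraMatrix 1 = 1 := by
  refine eq_of_mul_tetraVertices_transpose ?_
  rw [tetraMatrix_mul_transpose, Matrix.one_mul]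
  rfl

theorem tetraMatrix_mul (σ τ : Perm (Fin 4)) :
    tetraMatrix (σ * τ) = tetraMatrix σ * tetraMatrix τ := by
  refine eq_of_mul_tetraVertices_transpose ?_
  calc tetraMatrix (σ * τ) * tetraVerticesᵀ
      = (tetraVerticesᵀ.submatrix id σ).submatrix id τ := tetraMatrix_mul_transpose _
    _ = (tetraMatrix σ * tetraVerticesᵀ).submatrix id τ := by rw [tetraMatrix_mul_transpose]
    _ = tetraMatrix σ * tetraVerticesᵀ.submatrix id τ := by
      rw [submatrix_mul _ _ _ _ _ bijective_id, submatrix_id_id]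
    _ = tetraMatrix σ * tetraMatrix τ * tetraVerticesᵀ := by
      rw [Matrix.mul_assoc, tetraMatrix_mul_transpose]

def tetraHom : Perm (Fin 4) →* Matrix (Fin 3) (Fin 3) ℤ where
  toFun := tetraMatrix
  map_one' := tetraMatrix_one
  map_mul' := tetraMatrix_mul

theorem tetraHom_injective : Injective tetraHom := by
  refine (injective_iff_map_eq_one tetraHom).mpr fun σ hσ => Equiv.ext fun a => ?_
  have h : tetraVerticesᵀ.submatrix id σ = tetraVerticesᵀ := by
    rw [← tetraMatrix_mul_transpose, show tetraMatrix σ = 1 from hσ, Matrix.one_mul]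
  exact tetraVertices_row_injective (funext fun i => congrFun (congrFun h i) a)

/-- `finProdFinEquiv` sends `(k, s)` to `2k + s`, so block `0` carries the coordinates `y⁺` and
block `1` the coordinates `y⁻`. -/
def blockGL (i : Fin 2) : GL (Fin 3) ℤ →* GL6 :=
  (blockDiagonalGL (finProdFinEquiv : Fin 3 × Fin 2 ≃ Fin 6)).comp
    (MonoidHom.mulSingle (fun _ => GL (Fin 3) ℤ) i)

theorem blockGL_injective (i : Fin 2) : Injective (blockGL i) :=
  fun _ _ h => Pi.mulSingle_injective i (blockDiagonalGL_injective _ h)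

theorem commute_blockGL_zero_one (A B : GL (Fin 3) ℤ) :
    Commute (blockGL 0 A) (blockGL 1 B) := by
  simp only [blockGL, MonoidHom.comp_apply, MonoidHom.mulSingle_apply]
  exact (Pi.mulSingle_commute (f := fun _ : Fin 2 => GL (Fin 3) ℤ)
    (show (0 : Fin 2) ≠ 1 by decide) A B).map _

theorem disjoint_range_blockGL_zero_one : Disjoint (blockGL 0).range (blockGL 1).range := by
  rw [Subgroup.disjoint_def]
  rintro _ ⟨A, rfl⟩ ⟨B, hB⟩
  have hA : 1 = A := by
    simpa using congrFun (blockDiagonalGL_injective _ hB) 0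
  rw [← hA, map_one]

def plusHom : Perm (Fin 3) →* GL6 := (blockGL 0).comp permMatrixHom.toHomUnits

def minusHom : Perm (Fin 4) →* GL6 := (blockGL 1).comp tetraHom.toHomUnits

theorem plusHom_injective : Injective plusHom :=
  (blockGL_injective 0).comp (toHomUnits_injective permMatrixHom_injective)

theorem minusHom_injective : Injective minusHom :=
  (blockGL_injective 1).comp (toHomUnits_injective tetraHom_injective)

theorem commute_plusHom_minusHom (σ : Perm (Fin 3)) (τ : Perm (Fin 4)) :
    Commute (plusHom σ) (minusHom τ) :=
  commute_blockGL_zero_one _ _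

theorem plusHom_swap_one_two : plusHom (swap 1 2) = h1 * r1 := Units.ext (by decide +kernel)
theorem plusHom_swap_zero_two : plusHom (swap 0 2) = h2 * r2 := Units.ext (by decide +kernel)
theorem plusHom_swap_zero_one : plusHom (swap 0 1) = h3 * r3 := Units.ext (by decide +kernel)
theorem minusHom_swap_zero_one : minusHom (swap 0 1) = v1 * r1 := Units.ext (by decide +kernel)
theorem minusHom_swap_zero_two : minusHom (swap 0 2) = v2 * r2 := Units.ext (by decide +kernel)
theorem minusHom_swap_zero_three : minusHom (swap 0 3) = v3 * r3 := Units.ext (by decide +kernel)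

theorem range_plusHom : plusHom.range = Subgroup.closure {h1 * r1, h2 * r2, h3 * r3} := by
  rw [MonoidHom.range_eq_map, ← closure_swaps_fin3, MonoidHom.map_closure, Set.image_insert_eq,
    Set.image_insert_eq, Set.image_singleton, plusHom_swap_one_two, plusHom_swap_zero_two,
    plusHom_swap_zero_one]

theorem range_minusHom : minusHom.range = Subgroup.closure {v1 * r1, v2 * r2, v3 * r3} := by
  rw [MonoidHom.range_eq_map, ← closure_swaps_fin4, MonoidHom.map_closure, Set.image_insert_eq,
    Set.image_insert_eq, Set.image_singleton, minusHom_swap_zero_one, minusHom_swap_zero_two,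
    minusHom_swap_zero_three]

def prodHom : Perm (Fin 3) × Perm (Fin 4) →* GL6 :=
  plusHom.noncommCoprod minusHom commute_plusHom_minusHom

theorem prodHom_injective : Injective prodHom :=
  (MonoidHom.noncommCoprod_injective _ _ _).mpr ⟨plusHom_injective, minusHom_injective,
    disjoint_range_blockGL_zero_one.mono (range_comp_le_range _ _) (range_comp_le_range _ _)⟩

theorem range_prodHom : prodHom.range =
    Subgroup.closure {h1 * r1, h2 * r2, h3 * r3, v1 * r1, v2 * r2, v3 * r3} := by
  rw [prodHom, MonoidHom.noncommCoprod_range, range_plusHom, range_minusHom,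
    ← Subgroup.closure_union, Set.insert_union, Set.insert_union, Set.singleton_union]

theorem stmt_3 :
    (∀ a ∈ Subgroup.closure ({h1 * r1, h2 * r2, h3 * r3} : Set GL6),
      ∀ b ∈ Subgroup.closure ({v1 * r1, v2 * r2, v3 * r3} : Set GL6), a * b = b * a) ∧
    Nonempty ((Subgroup.closure ({h1 * r1, h2 * r2, h3 * r3} : Set GL6))
      ≃* Equiv.Perm (Fin 3)) ∧
    Nonempty ((Subgroup.closure ({v1 * r1, v2 * r2, v3 * r3} : Set GL6))
      ≃* Equiv.Perm (Fin 4)) ∧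
    Nonempty ((Subgroup.closure
        ({h1 * r1, h2 * r2, h3 * r3, v1 * r1, v2 * r2, v3 * r3} : Set GL6))
      ≃* Equiv.Perm (Fin 3) × Equiv.Perm (Fin 4)) := by
  refine ⟨?_, nonempty_mulEquiv_of_range_eq plusHom_injective range_plusHom,
    nonempty_mulEquiv_of_range_eq minusHom_injective range_minusHom,
    nonempty_mulEquiv_of_range_eq prodHom_injective range_prodHom⟩
  rintro _ ha _ hb
  rw [← range_plusHom] at ha
  rw [← range_minusHom] at hb
  obtain ⟨σ, rfl⟩ := ha
  obtain ⟨τ, rfl⟩ := hb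
  exact commute_plusHom_minusHom σ τ

end Stmt3
end

section
/- With W(D₆) = {±1}⁵ ⋊ S₆ acting on ℤ⁶ (coordinates relabeled y₁⁺,y₁⁻,y₂⁺,y₂⁻,y₃⁺,y₃⁻), let I be the subgroup of order 2⁶ generated by the three transpositions swapping yᵢ⁺ ↔ yᵢ⁻ together with appropriate even sign changes (the 'orientation reversals'), and let R = {r₁,r₂,r₃} be the Regge elements (rᵢ swaps y_j⁺ ↔ y_k⁺ and negates y_j⁻, y_k⁻). Then I together with R generates all of W(D₆), a group of order 23040. -/
/-!
**Statement 4.**  `W(D₆)` realized as the group of signed permutation matrices on the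
coordinates `(y₁⁺, y₁⁻, y₂⁺, y₂⁻, y₃⁺, y₃⁻)` (indices `0,…,5`) with an even number of
sign changes.  The subgroup `I` of order `2⁶` of orientation reversals is generated, for
each pair `i ∈ {1,2,3}`, by the swap `yᵢ⁺ ↔ yᵢ⁻` and the negated swap
`yᵢ⁺ ↦ −yᵢ⁻, yᵢ⁻ ↦ −yᵢ⁺`.  Together with the three Regge elements `rᵢ` (which swap
`y_j⁺ ↔ y_k⁺` and negate `y_j⁻, y_k⁻`), these generate all of `W(D₆)`, a group of order
`23040`.
-/

namespace Stmt4

abbrev GL6 := Matrix.GeneralLinearGroup (Fin 6) ℤ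

def mkInvol (A : Matrix (Fin 6) (Fin 6) ℤ) (h : A * A = 1) : GL6 := ⟨A, A, h, h⟩

-- orientation reversals: plain swaps on the pairs
def S1mat : Matrix (Fin 6) (Fin 6) ℤ :=
  !![0,1,0,0,0,0; 1,0,0,0,0,0; 0,0,1,0,0,0; 0,0,0,1,0,0; 0,0,0,0,1,0; 0,0,0,0,0,1]
def S2mat : Matrix (Fin 6) (Fin 6) ℤ :=
  !![1,0,0,0,0,0; 0,1,0,0,0,0; 0,0,0,1,0,0; 0,0,1,0,0,0; 0,0,0,0,1,0; 0,0,0,0,0,1]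
def S3mat : Matrix (Fin 6) (Fin 6) ℤ :=
  !![1,0,0,0,0,0; 0,1,0,0,0,0; 0,0,1,0,0,0; 0,0,0,1,0,0; 0,0,0,0,0,1; 0,0,0,0,1,0]
-- orientation reversals: negated swaps on the pairs
def T1mat : Matrix (Fin 6) (Fin 6) ℤ :=
  !![0,-1,0,0,0,0; -1,0,0,0,0,0; 0,0,1,0,0,0; 0,0,0,1,0,0; 0,0,0,0,1,0; 0,0,0,0,0,1]
def T2mat : Matrix (Fin 6) (Fin 6) ℤ :=
  !![1,0,0,0,0,0; 0,1,0,0,0,0; 0,0,0,-1,0,0; 0,0,-1,0,0,0; 0,0,0,0,1,0; 0,0,0,0,0,1]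
def T3mat : Matrix (Fin 6) (Fin 6) ℤ :=
  !![1,0,0,0,0,0; 0,1,0,0,0,0; 0,0,1,0,0,0; 0,0,0,1,0,0; 0,0,0,0,0,-1; 0,0,0,0,-1,0]
-- the Regge elements
def R1mat : Matrix (Fin 6) (Fin 6) ℤ :=
  !![1,0,0,0,0,0; 0,1,0,0,0,0; 0,0,0,0,1,0; 0,0,0,-1,0,0; 0,0,1,0,0,0; 0,0,0,0,0,-1]
def R2mat : Matrix (Fin 6) (Fin 6) ℤ :=
  !![0,0,0,0,1,0; 0,-1,0,0,0,0; 0,0,1,0,0,0; 0,0,0,1,0,0; 1,0,0,0,0,0; 0,0,0,0,0,-1]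
def R3mat : Matrix (Fin 6) (Fin 6) ℤ :=
  !![0,0,1,0,0,0; 0,-1,0,0,0,0; 1,0,0,0,0,0; 0,0,0,-1,0,0; 0,0,0,0,1,0; 0,0,0,0,0,1]

def s1 : GL6 := mkInvol S1mat (by decide)
def s2 : GL6 := mkInvol S2mat (by decide)
def s3 : GL6 := mkInvol S3mat (by decide)
def t1 : GL6 := mkInvol T1mat (by decide)
def t2 : GL6 := mkInvol T2mat (by decide)
def t3 : GL6 := mkInvol T3mat (by decide)
def r1 : GL6 := mkInvol R1mat (by decide)
def r2 : GL6 := mkInvol R2mat (by decide)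
def r3 : GL6 := mkInvol R3mat (by decide)

/-- A signed permutation matrix with an even number of `−1`s, i.e. an element of the
Weyl group `W(D₆)` in its standard coordinates. -/
def IsEvenSignedPerm (g : GL6) : Prop :=
  ∃ (σ : Equiv.Perm (Fin 6)) (ε : Fin 6 → ℤ),
    (∀ i, ε i = 1 ∨ ε i = -1) ∧ (∏ i, ε i) = 1 ∧
    (g : Matrix (Fin 6) (Fin 6) ℤ) = Matrix.of fun i j => if j = σ i then ε i else 0

open Equiv Matrix
section Aux

def gens : Set GL6 := {s1, s2, s3, t1, t2, t3, r1, r2, r3}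

abbrev C : Subgroup GL6 := Subgroup.closure gens

lemma hs1 : s1 ∈ C := Subgroup.subset_closure (by simp [gens])
lemma hs2 : s2 ∈ C := Subgroup.subset_closure (by simp [gens])
lemma hs3 : s3 ∈ C := Subgroup.subset_closure (by simp [gens])
lemma ht1 : t1 ∈ C := Subgroup.subset_closure (by simp [gens])
lemma ht2 : t2 ∈ C := Subgroup.subset_closure (by simp [gens])
lemma ht3 : t3 ∈ C := Subgroup.subset_closure (by simp [gens])
lemma hr1 : r1 ∈ C := Subgroup.subset_closure (by simp [gens])
lemma hr2 : r2 ∈ C := Subgroup.subset_closure (by simp [gens])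
lemma hr3 : r3 ∈ C := Subgroup.subset_closure (by simp [gens])

lemma mem_of_eq (g h : GL6) (hh : h ∈ C)
    (heq : (g : Matrix (Fin 6) (Fin 6) ℤ) = (h : Matrix (Fin 6) (Fin 6) ℤ)) : g ∈ C := by
  rw [show g = h from Units.ext heq]; exact hh

/-- permutation matrix -/
def pmat (σ : Equiv.Perm (Fin 6)) : Matrix (Fin 6) (Fin 6) ℤ :=
  Matrix.of fun i j => if j = σ i then 1 else 0

lemma pmat_mul (σ τ : Equiv.Perm (Fin 6)) : pmat σ * pmat τ = pmat (σ.trans τ) := by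
  ext i k
  rw [Matrix.mul_apply, Finset.sum_eq_single (σ i)]
  · simp [pmat]; exact if_congr Iff.rfl rfl rfl
  · intro j _ hj; simp [pmat, hj]
  · intro h; exact absurd (Finset.mem_univ _) h

lemma pmat_one : pmat 1 = 1 := by
  ext i j
  simp [pmat, Matrix.one_apply, eq_comm]

def pGL (σ : Equiv.Perm (Fin 6)) : GL6 :=
  ⟨pmat σ, pmat σ⁻¹,
   by rw [pmat_mul, show σ.trans σ⁻¹ = 1 from inv_mul_cancel σ]; exact pmat_one,
   by rw [pmat_mul, show σ⁻¹.trans σ = 1 from mul_inv_cancel σ]; exact pmat_one⟩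

lemma pGL_coe (σ : Equiv.Perm (Fin 6)) : (pGL σ : Matrix (Fin 6) (Fin 6) ℤ) = pmat σ := rfl

lemma pGL_mul (σ τ : Equiv.Perm (Fin 6)) : pGL σ * pGL τ = pGL (σ.trans τ) :=
  Units.ext (pmat_mul σ τ)

lemma pGL_one : pGL 1 = 1 := Units.ext pmat_one

lemma swap_mem (a b : Fin 6) : pGL (Equiv.swap a b) ∈ C := by
  fin_cases a <;> fin_cases b
  · exact mem_of_eq _ 1 (one_mem _) (by decide)
  · exact mem_of_eq _ (s1) hs1 (by decide)
  · exact mem_of_eq _ (r1*r3*r2) (mul_mem (mul_mem hr1 hr3) hr2) (by decide)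
  · exact mem_of_eq _ (r3*t2*r3) (mul_mem (mul_mem hr3 ht2) hr3) (by decide)
  · exact mem_of_eq _ (r1*r2*r3) (mul_mem (mul_mem hr1 hr2) hr3) (by decide)
  · exact mem_of_eq _ (r2*t3*r2) (mul_mem (mul_mem hr2 ht3) hr2) (by decide)
  · exact mem_of_eq _ (s1) hs1 (by decide)
  · exact mem_of_eq _ 1 (one_mem _) (by decide)
  · exact mem_of_eq _ (r3*t1*r3) (mul_mem (mul_mem hr3 ht1) hr3) (by decide)
  · exact mem_of_eq _ (s1*t2*r3*s2*t1) (mul_mem (mul_mem (mul_mem (mul_mem hs1 ht2) hr3) hs2) ht1) (by decide)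
  · exact mem_of_eq _ (r2*t1*r2) (mul_mem (mul_mem hr2 ht1) hr2) (by decide)
  · exact mem_of_eq _ (s1*t3*r2*s3*t1) (mul_mem (mul_mem (mul_mem (mul_mem hs1 ht3) hr2) hs3) ht1) (by decide)
  · exact mem_of_eq _ (r1*r3*r2) (mul_mem (mul_mem hr1 hr3) hr2) (by decide)
  · exact mem_of_eq _ (r3*t1*r3) (mul_mem (mul_mem hr3 ht1) hr3) (by decide)
  · exact mem_of_eq _ 1 (one_mem _) (by decide)
  · exact mem_of_eq _ (s2) hs2 (by decide)
  · exact mem_of_eq _ (r2*r1*r3) (mul_mem (mul_mem hr2 hr1) hr3) (by decide)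
  · exact mem_of_eq _ (r1*t3*r1) (mul_mem (mul_mem hr1 ht3) hr1) (by decide)
  · exact mem_of_eq _ (r3*t2*r3) (mul_mem (mul_mem hr3 ht2) hr3) (by decide)
  · exact mem_of_eq _ (s1*t2*r3*s2*t1) (mul_mem (mul_mem (mul_mem (mul_mem hs1 ht2) hr3) hs2) ht1) (by decide)
  · exact mem_of_eq _ (s2) hs2 (by decide)
  · exact mem_of_eq _ 1 (one_mem _) (by decide)
  · exact mem_of_eq _ (r1*t2*r1) (mul_mem (mul_mem hr1 ht2) hr1) (by decide)
  · exact mem_of_eq _ (s2*t3*r1*s3*t2) (mul_mem (mul_mem (mul_mem (mul_mem hs2 ht3) hr1) hs3) ht2) (by decide)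
  · exact mem_of_eq _ (r1*r2*r3) (mul_mem (mul_mem hr1 hr2) hr3) (by decide)
  · exact mem_of_eq _ (r2*t1*r2) (mul_mem (mul_mem hr2 ht1) hr2) (by decide)
  · exact mem_of_eq _ (r2*r1*r3) (mul_mem (mul_mem hr2 hr1) hr3) (by decide)
  · exact mem_of_eq _ (r1*t2*r1) (mul_mem (mul_mem hr1 ht2) hr1) (by decide)
  · exact mem_of_eq _ 1 (one_mem _) (by decide)
  · exact mem_of_eq _ (s3) hs3 (by decide)
  · exact mem_of_eq _ (r2*t3*r2) (mul_mem (mul_mem hr2 ht3) hr2) (by decide)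
  · exact mem_of_eq _ (s1*t3*r2*s3*t1) (mul_mem (mul_mem (mul_mem (mul_mem hs1 ht3) hr2) hs3) ht1) (by decide)
  · exact mem_of_eq _ (r1*t3*r1) (mul_mem (mul_mem hr1 ht3) hr1) (by decide)
  · exact mem_of_eq _ (s2*t3*r1*s3*t2) (mul_mem (mul_mem (mul_mem (mul_mem hs2 ht3) hr1) hs3) ht2) (by decide)
  · exact mem_of_eq _ (s3) hs3 (by decide)
  · exact mem_of_eq _ 1 (one_mem _) (by decide)

lemma perm_mem (σ : Equiv.Perm (Fin 6)) : pGL σ ∈ C := by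
  let K : Subgroup (Equiv.Perm (Fin 6)) :=
    { carrier := {σ | pGL σ ∈ C}
      one_mem' := by simpa [pGL_one] using (one_mem C)
      mul_mem' := by
        intro σ τ hσ hτ
        have hσ' : pGL σ ∈ C := hσ
        have hτ' : pGL τ ∈ C := hτ
        have h : pGL (σ * τ) = pGL τ * pGL σ := by
          rw [pGL_mul]; rfl
        show pGL (σ * τ) ∈ C
        rw [h]; exact mul_mem hτ' hσ'
      inv_mem' := by
        intro σ hσ
        have hσ' : pGL σ ∈ C := hσ
        have h2 : pGL σ⁻¹ = (pGL σ)⁻¹ := eq_inv_of_mul_eq_one_left (by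
          rw [pGL_mul, show σ⁻¹.trans σ = 1 from mul_inv_cancel σ]; exact pGL_one)
        show pGL σ⁻¹ ∈ C
        rw [h2]; exact inv_mem hσ' }
  have hK : ∀ τ : Equiv.Perm (Fin 6), τ.IsSwap → τ ∈ K := by
    rintro τ ⟨a, b, -, rfl⟩
    exact swap_mem a b
  have : σ ∈ K := by
    have htop : (⊤ : Subgroup (Equiv.Perm (Fin 6))) ≤ K := by
      rw [← Equiv.Perm.closure_isSwap]
      exact (Subgroup.closure_le K).2 (fun τ hτ => hK τ hτ)
    exact htop (Subgroup.mem_top σ)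
  exact this

/-- diagonal sign matrices -/
def dmat (b : Fin 6 → Bool) : Matrix (Fin 6) (Fin 6) ℤ :=
  Matrix.diagonal fun i => if b i then -1 else 1

lemma dmat_sq (b : Fin 6 → Bool) : dmat b * dmat b = 1 := by
  rw [dmat, Matrix.diagonal_mul_diagonal]
  have : (fun i => (if b i then (-1:ℤ) else 1) * (if b i then -1 else 1)) = fun _ => (1:ℤ) := by
    funext i; cases b i <;> simp
  rw [this, Matrix.diagonal_one]

def dGL (b : Fin 6 → Bool) : GL6 := ⟨dmat b, dmat b, dmat_sq b, dmat_sq b⟩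

lemma dGL_coe (b : Fin 6 → Bool) : (dGL b : Matrix (Fin 6) (Fin 6) ℤ) = dmat b := rfl

def dword (b : Fin 6 → Bool) : GL6 :=
  (cond (b 0) (s1*t1) 1) *
  (cond (xor (b 0) (b 1)) (r3*s1*t1*r3) 1) *
  (cond (xor (xor (b 0) (b 1)) (b 2)) (s2*t2) 1) *
  (cond (xor (xor (xor (b 0) (b 1)) (b 2)) (b 3)) (r1*s2*t2*r1) 1) *
  (cond (xor (xor (xor (xor (b 0) (b 1)) (b 2)) (b 3)) (b 4)) (s3*t3) 1)

lemma cond_mem (c : Bool) {x : GL6} (hx : x ∈ C) : (cond c x 1) ∈ C := by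
  cases c
  · exact one_mem _
  · exact hx

lemma dword_mem (b : Fin 6 → Bool) : dword b ∈ C :=
  mul_mem (mul_mem (mul_mem (mul_mem
    (cond_mem _ (mul_mem hs1 ht1))
    (cond_mem _ (mul_mem (mul_mem (mul_mem hr3 hs1) ht1) hr3)))
    (cond_mem _ (mul_mem hs2 ht2)))
    (cond_mem _ (mul_mem (mul_mem (mul_mem hr1 hs2) ht2) hr1)))
    (cond_mem _ (mul_mem hs3 ht3))

lemma dword_key : ∀ b : Fin 6 → Bool, (∏ i, (if b i then (-1:ℤ) else 1)) = 1 →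
    dmat b = (dword b : Matrix (Fin 6) (Fin 6) ℤ) := by decide

lemma diag_mem (b : Fin 6 → Bool) (hb : (∏ i, (if b i then (-1:ℤ) else 1)) = 1) :
    dGL b ∈ C :=
  mem_of_eq _ (dword b) (dword_mem b) (dword_key b hb)

end Aux

lemma prod_sq_one {ε : Fin 6 → ℤ} (hε : ∀ i, ε i = 1 ∨ ε i = -1) (i : Fin 6) :
    ε i * ε i = 1 := by rcases hε i with h | h <;> rw [h] <;> norm_num

def W : Subgroup GL6 where
  carrier := {g | IsEvenSignedPerm g}
  one_mem' := by
    refine ⟨1, fun _ => 1, fun i => Or.inl rfl, by simp, ?_⟩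
    ext i j
    simp [Matrix.one_apply, eq_comm]
  mul_mem' := by
    rintro g h ⟨σ, ε, hε, hp, hg⟩ ⟨τ, δ, hδ, hq, hh⟩
    refine ⟨σ.trans τ, fun i => ε i * δ (σ i), ?_, ?_, ?_⟩
    · intro i
      rcases hε i with h1 | h1 <;> rcases hδ (σ i) with h2 | h2 <;>
        simp [h1, h2]
    · rw [Finset.prod_mul_distrib, hp, one_mul]
      rw [show (∏ i, δ (σ i)) = ∏ i, δ i from Equiv.prod_comp σ δ]
      exact hq
    · rw [Units.val_mul, hg, hh]
      ext i k
      rw [Matrix.mul_apply, Finset.sum_eq_single (σ i)]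
      · simp; exact if_congr Iff.rfl rfl rfl
      · intro j _ hj; simp [hj]
      · intro h; exact absurd (Finset.mem_univ _) h
  inv_mem' := by
    rintro g ⟨σ, ε, hε, hp, hg⟩
    refine ⟨σ⁻¹, fun i => ε (σ⁻¹ i), ?_, ?_, ?_⟩
    · intro i; exact hε _
    · rw [show (∏ i, ε (σ⁻¹ i)) = ∏ i, ε i from Equiv.prod_comp σ⁻¹ ε]
      exact hp
    · set M : Matrix (Fin 6) (Fin 6) ℤ :=
        Matrix.of (fun i j => if j = σ⁻¹ i then ε (σ⁻¹ i) else 0) with hM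
      have h1 : (↑g : Matrix (Fin 6) (Fin 6) ℤ) * M = 1 := by
        rw [hg]
        ext i k
        rw [Matrix.mul_apply, Finset.sum_eq_single (σ i)]
        · rcases eq_or_ne k i with rfl | hk
          · simp [hM, Matrix.one_apply, prod_sq_one hε]
          · simp [hM, Matrix.one_apply, hk, Ne.symm hk]
        · intro j _ hj; simp [hj]
        · intro h; exact absurd (Finset.mem_univ _) h
      calc (↑g⁻¹ : Matrix (Fin 6) (Fin 6) ℤ)
          = ↑g⁻¹ * ((↑g : Matrix (Fin 6) (Fin 6) ℤ) * M) := by rw [h1, mul_one]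
        _ = (↑g⁻¹ * (↑g : Matrix (Fin 6) (Fin 6) ℤ)) * M := by rw [mul_assoc]
        _ = M := by rw [Units.inv_mul, one_mul]

lemma gens_sub_W : gens ⊆ W.carrier := by
  rintro x (rfl | rfl | rfl | rfl | rfl | rfl | rfl | rfl | rfl)
  · exact ⟨Equiv.swap 0 1, ![1,1,1,1,1,1], by decide, by decide, by decide⟩
  · exact ⟨Equiv.swap 2 3, ![1,1,1,1,1,1], by decide, by decide, by decide⟩
  · exact ⟨Equiv.swap 4 5, ![1,1,1,1,1,1], by decide, by decide, by decide⟩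
  · exact ⟨Equiv.swap 0 1, ![-1,-1,1,1,1,1], by decide, by decide, by decide⟩
  · exact ⟨Equiv.swap 2 3, ![1,1,-1,-1,1,1], by decide, by decide, by decide⟩
  · exact ⟨Equiv.swap 4 5, ![1,1,1,1,-1,-1], by decide, by decide, by decide⟩
  · exact ⟨Equiv.swap 2 4, ![1,1,1,-1,1,-1], by decide, by decide, by decide⟩
  · exact ⟨Equiv.swap 0 4, ![1,-1,1,1,1,-1], by decide, by decide, by decide⟩
  · exact ⟨Equiv.swap 0 2, ![1,-1,1,-1,1,1], by decide, by decide, by decide⟩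

lemma closure_le_W : C ≤ W := (Subgroup.closure_le W).2 gens_sub_W

lemma esp_decomp {g : GL6} (hg : IsEvenSignedPerm g) :
    ∃ (σ : Equiv.Perm (Fin 6)) (b : Fin 6 → Bool),
      (∏ i, (if b i then (-1:ℤ) else 1)) = 1 ∧ g = dGL b * pGL σ := by
  obtain ⟨σ, ε, hε, hp, hmat⟩ := hg
  set b : Fin 6 → Bool := fun i => decide (ε i = -1) with hb
  have hεb : ∀ i, ε i = if b i then -1 else 1 := by
    intro i
    rcases hε i with h | h <;> simp [hb, h]
  refine ⟨σ, b, ?_, ?_⟩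
  · exact (Finset.prod_congr rfl (fun i _ => (hεb i).symm)).trans hp
  · apply Units.ext
    have : (↑(dGL b * pGL σ) : Matrix (Fin 6) (Fin 6) ℤ) = dmat b * pmat σ := rfl
    rw [this, hmat]
    ext i j
    rw [dmat, Matrix.diagonal_mul]
    simp only [pmat, Matrix.of_apply, hεb i, mul_ite, mul_one, mul_zero]

lemma mem_C_iff (g : GL6) : g ∈ C ↔ IsEvenSignedPerm g := by
  constructor
  · intro hg; exact closure_le_W hg
  · intro hg
    obtain ⟨σ, b, hb, rfl⟩ := esp_decomp hg
    exact mul_mem (diag_mem b hb) (perm_mem σ)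

abbrev E := {b : Fin 6 → Bool // (∏ i, (if b i then (-1:ℤ) else 1)) = 1}

lemma sign_ne_zero (c : Bool) : (if c then (-1:ℤ) else 1) ≠ 0 := by
  cases c <;> simp

def bij : Equiv.Perm (Fin 6) × E → C := fun p =>
  ⟨dGL p.2.1 * pGL p.1, mul_mem (diag_mem _ p.2.2) (perm_mem _)⟩

lemma bij_matrix (σ : Equiv.Perm (Fin 6)) (b : Fin 6 → Bool) (i j : Fin 6) :
    (↑(dGL b * pGL σ) : Matrix (Fin 6) (Fin 6) ℤ) i j
      = if j = σ i then (if b i then -1 else 1) else 0 := by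
  rw [Units.val_mul, dGL_coe, pGL_coe, dmat, Matrix.diagonal_mul]
  simp only [pmat, Matrix.of_apply, mul_ite, mul_one, mul_zero]

lemma bij_bijective : Function.Bijective bij := by
  constructor
  · rintro ⟨σ, b, hb⟩ ⟨τ, c, hc⟩ h
    have hm : (↑(dGL b * pGL σ) : Matrix (Fin 6) (Fin 6) ℤ)
        = (↑(dGL c * pGL τ) : Matrix (Fin 6) (Fin 6) ℤ) := by
      have : dGL b * pGL σ = dGL c * pGL τ := Subtype.ext_iff.1 h
      rw [this]
    have key : ∀ i, σ i = τ i ∧ b i = c i := by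
      intro i
      have e1 := congrFun (congrFun hm i) (σ i)
      rw [bij_matrix, bij_matrix, if_pos rfl] at e1
      by_cases hστ : σ i = τ i
      · refine ⟨hστ, ?_⟩
        rw [if_pos hστ] at e1
        cases hbc : b i <;> cases hcc : c i <;> rw [hbc, hcc] at e1 <;> simp_all
      · rw [if_neg hστ] at e1
        exact absurd e1 (sign_ne_zero (b i))
    have hσ : σ = τ := Equiv.ext fun i => (key i).1
    have hbceq : b = c := funext fun i => (key i).2
    subst hσ; subst hbceq
    rfl
  · rintro ⟨g, hg⟩
    obtain ⟨σ, b, hb, rfl⟩ := esp_decomp ((mem_C_iff g).1 hg)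
    exact ⟨(σ, ⟨b, hb⟩), rfl⟩

lemma card_C : Nat.card C = 23040 := by
  rw [← Nat.card_eq_of_bijective bij bij_bijective, Nat.card_prod]
  have h1 : Nat.card (Equiv.Perm (Fin 6)) = 720 := by
    rw [Nat.card_eq_fintype_card, Fintype.card_perm]
    decide
  have h2 : Nat.card E = 32 := by
    rw [Nat.card_eq_fintype_card]
    decide
  rw [h1, h2]

theorem stmt_4 :
    (∀ g : GL6,
        g ∈ Subgroup.closure ({s1, s2, s3, t1, t2, t3, r1, r2, r3} : Set GL6)
          ↔ IsEvenSignedPerm g) ∧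
    Nat.card (Subgroup.closure ({s1, s2, s3, t1, t2, t3, r1, r2, r3} : Set GL6))
      = 23040 := by
  exact ⟨mem_C_iff, card_C⟩

end Stmt4
end
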